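/- The optimized unraveling U_opt is sound for every U_opt-RLNE eDCTRS that is non-LV or non-RV: if R is an eDCTRS over a signature F that is ultra-right-linear and ultra-non-erasing w.r.t. U_opt and is non-LV or non-RV, then for all terms s, t ∈ T(F,V), s →*_{U_opt(R)} t implies s →*_R t. -/

import Mathlib

set_option maxHeartbeats 1000000

universe u

/-! ## Terms -/

inductive Term (α : Type u) : Type u where
  | var : ℕ → Term α
  | app : α → List (Term α) → Term α

namespace Term

variable {α : Type u}

/-- The list of variable occurrences of a term (left-to-right). -/
def varList : Term α → List ℕ
  | var x => [x]
  | app _ ts => ts.attach.foldr (fun t acc => varList t.1 ++ acc) []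
decreasing_by
  simp only [Term.app.sizeOf_spec]
  have := List.sizeOf_lt_of_mem t.2
  omega

/-- The list of (function symbol, number of arguments) occurrences of a term. -/
def apps : Term α → List (α × ℕ)
  | var _ => []
  | app f ts => (f, ts.length) :: ts.attach.foldr (fun t acc => apps t.1 ++ acc) []
decreasing_by
  simp only [Term.app.sizeOf_spec]
  have := List.sizeOf_lt_of_mem t.2
  omega

/-- `Var(t)`: the set of variables of a term. -/
def varFinset (t : Term α) : Finset ℕ := t.varList.toFinset

/-- All function symbols of the term belong to the signature `F`. -/
def overSig (F : Set α) (t : Term α) : Prop := ∀ p ∈ t.apps, p.1 ∈ F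

/-- `t ∈ T(F,V)`: all function symbols belong to `F` and are applied
according to their arities. -/
def inT (F : Set α) (ar : α → ℕ) (t : Term α) : Prop :=
  ∀ p ∈ t.apps, p.1 ∈ F ∧ ar p.1 = p.2

/-- A term is linear if no variable occurs twice in it. -/
def Linear (t : Term α) : Prop := t.varList.Nodup

/-- A term is ground if it contains no variable. -/
def Ground (t : Term α) : Prop := t.varList = []

/-- Applying a substitution to a term. -/
def subst (σ : ℕ → Term α) : Term α → Term α
  | var x => σ x
  | app f ts => app f (ts.attach.map (fun t => subst σ t.1))
decreasing_by
  simp only [Term.app.sizeOf_spec]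
  have := List.sizeOf_lt_of_mem t.2
  omega

def isVar : Term α → Prop
  | var _ => True
  | app _ _ => False

def root? : Term α → Option α
  | var _ => none
  | app f _ => some f

def args : Term α → List (Term α)
  | var _ => []
  | app _ ts => ts

end Term

def junkPair {α : Type u} : Term α × Term α := (Term.var 0, Term.var 0)

/-! ## Conditional rewrite rules -/

/-- An extended (oriented) conditional rewrite rule `l → r ⇐ s₁ ↠ t₁; …; s_k ↠ t_k`,
where `conds` is the list of pairs `(sᵢ, tᵢ)`. -/
structure ERule (α : Type u) : Type u where
  lhs : Term α
  rhs : Term α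
  conds : List (Term α × Term α)

namespace ERule

variable {α : Type u}

def nonLV (ρ : ERule α) : Prop := ¬ ρ.lhs.isVar
def nonRV (ρ : ERule α) : Prop := ¬ ρ.rhs.isVar

/-- `X_{j+1} = Var(l, t_1, …, t_j)` (0-based index `j`). -/
def Xset (ρ : ERule α) (j : ℕ) : Finset ℕ :=
  ρ.lhs.varFinset ∪ ((ρ.conds.take j).map (fun c => c.2.varFinset)).foldr (· ∪ ·) ∅

/-- `Y_{j+1} = Var(r, t_{j+1}, s_{j+2}, t_{j+2}, …, s_k, t_k)` (0-based index `j`). -/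
def Yset (ρ : ERule α) (j : ℕ) : Finset ℕ :=
  ρ.rhs.varFinset ∪ (ρ.conds.getD j junkPair).2.varFinset ∪
    ((ρ.conds.drop (j+1)).map (fun c => c.1.varFinset ∪ c.2.varFinset)).foldr (· ∪ ·) ∅

/-- `Z_i = X_i ∩ Y_i`. -/
def Zset (ρ : ERule α) (j : ℕ) : Finset ℕ := ρ.Xset j ∩ ρ.Yset j

/-- Determinism: `Var(sᵢ) ⊆ Var(l, t₁, …, t_{i-1})`. -/
def Det (ρ : ERule α) : Prop :=
  ∀ j < ρ.conds.length, (ρ.conds.getD j junkPair).1.varFinset ⊆ ρ.Xset j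

/-- Type 3: `Var(r) ⊆ Var(l, s₁, t₁, …, s_k, t_k)`. -/
def Type3 (ρ : ERule α) : Prop :=
  ρ.rhs.varFinset ⊆
    ρ.lhs.varFinset ∪ ((ρ.conds.map (fun c => c.1.varFinset ∪ c.2.varFinset)).foldr (· ∪ ·) ∅)

/-- Left-linearity of a rule. -/
def LL (ρ : ERule α) : Prop := ρ.lhs.Linear
/-- Right-linearity of a rule. -/
def RL (ρ : ERule α) : Prop := ρ.rhs.Linear
/-- Non-erasingness of a rule: `Var(l) ⊆ Var(r)`. -/
def NE (ρ : ERule α) : Prop := ρ.lhs.varFinset ⊆ ρ.rhs.varFinset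

/-- `EVar(l → r) = Var(r) \\ Var(l)`, the extra variables of a rule. -/
def extraVars (ρ : ERule α) : Finset ℕ := ρ.rhs.varFinset \ ρ.lhs.varFinset

/-- The inverted rule `(l → r ⇐ s₁ ↠ t₁; …; s_k ↠ t_k)⁻¹ = r → l ⇐ t_k ↠ s_k; …; t₁ ↠ s₁`. -/
def inv (ρ : ERule α) : ERule α :=
  ⟨ρ.rhs, ρ.lhs, (ρ.conds.map (fun c => (c.2, c.1))).reverse⟩

def allVarFinset (ρ : ERule α) : Finset ℕ :=
  ρ.lhs.varFinset ∪ ρ.rhs.varFinset ∪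
    ((ρ.conds.map (fun c => c.1.varFinset ∪ c.2.varFinset)).foldr (· ∪ ·) ∅)

/-- A number strictly larger than every variable of the rule; used to pick fresh variables. -/
def freshBase (ρ : ERule α) : ℕ := ρ.allVarFinset.sup id + 1

/-- All terms of the rule use only symbols of `F`. -/
def overSig (F : Set α) (ρ : ERule α) : Prop :=
  ρ.lhs.overSig F ∧ ρ.rhs.overSig F ∧ ∀ c ∈ ρ.conds, c.1.overSig F ∧ c.2.overSig F

/-- All terms of the rule are in `T(F,V)` (symbols of `F`, arity-correct). -/
def inT (F : Set α) (ar : α → ℕ) (ρ : ERule α) : Prop :=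
  ρ.lhs.inT F ar ∧ ρ.rhs.inT F ar ∧ ∀ c ∈ ρ.conds, c.1.inT F ar ∧ c.2.inT F ar

end ERule

/-! ## Reduction relations -/

/-- One-hole contexts. -/
inductive Ctx (α : Type u) : Type u where
  | hole : Ctx α
  | app : α → List (Term α) → Ctx α → List (Term α) → Ctx α

def Ctx.plug {α : Type u} : Ctx α → Term α → Term α
  | .hole, t => t
  | .app f pre c post, t => .app f (pre ++ c.plug t :: post)

/-- The approximations `→_{(n),R}` of the reduction relation of an oriented eCTRS. -/
def RedN {α : Type u} (R : Set (ERule α)) : ℕ → Term α → Term α → Prop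
  | 0 => fun _ _ => False
  | n + 1 => fun s t =>
      RedN R n s t ∨
      ∃ ρ ∈ R, ∃ C : Ctx α, ∃ σ : ℕ → Term α,
        s = C.plug (ρ.lhs.subst σ) ∧ t = C.plug (ρ.rhs.subst σ) ∧
        ∀ c ∈ ρ.conds, Relation.ReflTransGen (RedN R n) (c.1.subst σ) (c.2.subst σ)

/-- The reduction relation `→_R` of an oriented eCTRS. -/
def Red {α : Type u} (R : Set (ERule α)) (s t : Term α) : Prop := ∃ n, RedN R n s t

/-- `→*_R`. -/
def RedStar {α : Type u} (R : Set (ERule α)) : Term α → Term α → Prop :=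
  Relation.ReflTransGen (Red R)

/-- The approximations of the reduction relation of a join CTRS
(conditions interpreted as joinability). -/
def JRedN {α : Type u} (R : Set (ERule α)) : ℕ → Term α → Term α → Prop
  | 0 => fun _ _ => False
  | n + 1 => fun s t =>
      JRedN R n s t ∨
      ∃ ρ ∈ R, ∃ C : Ctx α, ∃ σ : ℕ → Term α,
        s = C.plug (ρ.lhs.subst σ) ∧ t = C.plug (ρ.rhs.subst σ) ∧
        ∀ c ∈ ρ.conds, ∃ w, Relation.ReflTransGen (JRedN R n) (c.1.subst σ) w ∧
          Relation.ReflTransGen (JRedN R n) (c.2.subst σ) w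

/-- The reduction relation of a join CTRS. -/
def JRed {α : Type u} (R : Set (ERule α)) (s t : Term α) : Prop := ∃ n, JRedN R n s t

def JRedStar {α : Type u} (R : Set (ERule α)) : Term α → Term α → Prop :=
  Relation.ReflTransGen (JRed R)

/-- The underlying unconditional system `R_u`. -/
def Ru {α : Type u} (R : Set (ERule α)) : Set (ERule α) :=
  (fun ρ : ERule α => ⟨ρ.lhs, ρ.rhs, []⟩) '' R

/-- Normal form w.r.t. a system. -/
def IsNF {α : Type u} (R : Set (ERule α)) (t : Term α) : Prop := ∀ w, ¬ Red R t w

/-! ## Unravelings for deterministic CTRSs -/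

/-- The fixed-order sequence of a finite set of variables. -/
def seqOf (s : Finset ℕ) : List ℕ := s.sort (· ≤ ·)

/-- `U(t, x⃗)`: a U symbol applied to a term followed by a sequence of variables. -/
def mkU {α : Type u} (f : α) (t : Term α) (xs : List ℕ) : Term α :=
  .app f (t :: xs.map Term.var)

/-- Generic sequential unraveling of a single deterministic rule, where `carry j` is
the variable sequence carried by the `j`-th U symbol. -/
def unravelWith {α : Type u} (carry : ℕ → List ℕ) (u : ℕ → α) (ρ : ERule α) :
    List (ERule α) :=
  (List.range (ρ.conds.length + 1)).map (fun j =>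
    ⟨ if j = 0 then ρ.lhs else mkU (u (j-1)) (ρ.conds.getD (j-1) junkPair).2 (carry (j-1)),
      if j < ρ.conds.length then mkU (u j) (ρ.conds.getD j junkPair).1 (carry j) else ρ.rhs,
      [] ⟩)

/-- Ohlebusch's unraveling `U` of a single rule (carrying `X⃗ᵢ`). -/
def unravelU {α : Type u} (u : ℕ → α) (ρ : ERule α) : List (ERule α) :=
  unravelWith (fun j => seqOf (ρ.Xset j)) u ρ

/-- The optimized unraveling `U_opt` of a single rule (carrying `Z⃗ᵢ`). -/
def unravelOpt {α : Type u} (u : ℕ → α) (ρ : ERule α) : List (ERule α) :=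
  unravelWith (fun j => seqOf (ρ.Zset j)) u ρ

/-- `U(R)`. -/
def USys {α : Type u} (u : ERule α → ℕ → α) (R : Set (ERule α)) : Set (ERule α) :=
  { q | ∃ ρ ∈ R, q ∈ unravelU (u ρ) ρ }

/-- `U_opt(R)`. -/
def UoptSys {α : Type u} (u : ERule α → ℕ → α) (R : Set (ERule α)) : Set (ERule α) :=
  { q | ∃ ρ ∈ R, q ∈ unravelOpt (u ρ) ρ }

/-- The U symbols introduced for the rules of `R`. -/
def USymbols {α : Type u} (u : ERule α → ℕ → α) (R : Set (ERule α)) : Set α :=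
  { a | ∃ ρ ∈ R, ∃ i < ρ.conds.length, a = u ρ i }

/-- Freshness of the U symbols: they do not occur in `F` and are pairwise distinct. -/
def UFresh {α : Type u} (F : Set α) (u : ERule α → ℕ → α) (R : Set (ERule α)) : Prop :=
  (∀ ρ ∈ R, ∀ i < ρ.conds.length, u ρ i ∉ F) ∧
  (∀ ρ ∈ R, ∀ ρ' ∈ R, ∀ i < ρ.conds.length, ∀ j < ρ'.conds.length,
      u ρ i = u ρ' j → ρ = ρ' ∧ i = j)

/-! ## Positions, parallel reduction, EV-safe reduction -/

abbrev Pos := List ℕ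

/-- Subterm at a position. -/
def Term.sub? {α : Type u} : Pos → Term α → Option (Term α)
  | [], t => some t
  | _ :: _, .var _ => none
  | i :: p, .app _ ts => (ts[i]?).bind (Term.sub? p)

/-- Replacing the subterm at a position by `w`. -/
def Term.replaceAt {α : Type u} (w : Term α) : Pos → Term α → Term α
  | [], _ => w
  | _ :: _, .var x => .var x
  | i :: p, .app f ts =>
      .app f (ts.mapIdx (fun j s => if j = i then Term.replaceAt w p s else s))

/-- `Pos_F(t)`: non-variable positions of `t`. -/
def PosF {α : Type u} (t : Term α) : Set Pos :=
  { p | ∃ f ts, Term.sub? p t = some (Term.app f ts) }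

/-- `Pos_V(t)`: variable positions of `t`. -/
def PosV {α : Type u} (t : Term α) : Set Pos :=
  { p | ∃ x, Term.sub? p t = some (Term.var x) }

/-- One rewrite step of an eTRS at position `p`. -/
def RedAt {α : Type u} (R : Set (ERule α)) (p : Pos) (s t : Term α) : Prop :=
  ∃ ρ ∈ R, ρ.conds = [] ∧ ∃ σ : ℕ → Term α,
    Term.sub? p s = some (ρ.lhs.subst σ) ∧ t = Term.replaceAt (ρ.rhs.subst σ) p s

/-- Two positions are parallel. -/
def ParallelPos (p q : Pos) : Prop := ¬ p <+: q ∧ ¬ q <+: p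

/-- A sequence of single steps at the listed positions. -/
inductive RedSeqAt {α : Type u} (R : Set (ERule α)) : List Pos → Term α → Term α → Prop
  | nil (t : Term α) : RedSeqAt R [] t t
  | cons {ps s s' t} (p : Pos) : RedAt R p s s' → RedSeqAt R ps s' t →
      RedSeqAt R (p :: ps) s t

/-- One parallel rewrite step contracting the (pairwise parallel) positions in `P`. -/
def ParStep {α : Type u} (R : Set (ERule α)) (P : List Pos) (s t : Term α) : Prop :=
  P.Pairwise ParallelPos ∧ RedSeqAt R P s t

/-- The parallel reduction `⇉_R`. -/
def ParRed {α : Type u} (R : Set (ERule α)) (s t : Term α) : Prop :=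
  ∃ P, ParStep R P s t

/-- Parallel reduction where every contracted position is at or below a position of `Q`. -/
def ParRedBelow {α : Type u} (R : Set (ERule α)) (Q : Set Pos) (s t : Term α) : Prop :=
  ∃ P, ParStep R P s t ∧ ∀ p ∈ P, ∃ q ∈ Q, q <+: p

/-- `n`-fold composition of a relation. -/
def NFold {β : Type*} (r : β → β → Prop) : ℕ → β → β → Prop
  | 0 => Eq
  | n + 1 => fun a c => ∃ b, r a b ∧ NFold r n b c

/-- The update of the set of basic positions w.r.t. extra variables after a rewrite step
at position `p` with rule `l → r`. -/
def nextB {α : Type u} (B : Set Pos) (p : Pos) (l r : Term α) : Set Pos :=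
  { q | q ∈ B ∧ ¬ p <+: q }
  ∪ { q | ∃ q' ∈ PosF r, q = p ++ q' }
  ∪ { q | ∃ pv p' q', pv ∈ PosV l ∧ Term.sub? pv l = Term.sub? p' r ∧
        (p ++ pv ++ q') ∈ B ∧ q = p ++ p' ++ q' }

/-- Reduction sequences of an eTRS based on a set `B` of positions w.r.t. extra
variables, where additionally every term substituted for an extra variable of the
applied rule satisfies `T` (EV-instantiation on `T`). -/
inductive EVSeq {α : Type u} (R : Set (ERule α)) (T : Term α → Prop) :
    Set Pos → Term α → Term α → Prop
  | refl (B : Set Pos) (t : Term α) : EVSeq R T B t t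
  | step {B : Set Pos} {s s' t : Term α} (p : Pos) (ρ : ERule α) (σ : ℕ → Term α) :
      ρ ∈ R → ρ.conds = [] →
      Term.sub? p s = some (ρ.lhs.subst σ) →
      s' = Term.replaceAt (ρ.rhs.subst σ) p s →
      p ∈ B →
      (∀ x ∈ ρ.extraVars, T (σ x)) →
      EVSeq R T (nextB B p ρ.lhs ρ.rhs) s' t →
      EVSeq R T B s t

/-- An EV-safe reduction sequence `s ↪*_R t`, EV-instantiated on `T`. -/
def EVSafeI {α : Type u} (R : Set (ERule α)) (T : Term α → Prop) (s t : Term α) : Prop :=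
  EVSeq R T (PosF s) s t

/-- An EV-safe reduction sequence `s ↪*_R t`. -/
def EVSafe {α : Type u} (R : Set (ERule α)) (s t : Term α) : Prop :=
  EVSeq R (fun _ => True) (PosF s) s t

/-! ## Tree homomorphisms -/

/-- Applying the tree homomorphism determined by `h` to a term:
`φ(f(t₁, …, t_n)) = h(f){xᵢ ↦ φ(tᵢ)}` (the formal variable `xᵢ` is the variable `i - 1`). -/
def applyHom {α : Type u} (h : α → Term α) : Term α → Term α
  | .var x => .var x
  | .app f ts =>
      Term.subst (fun i => (ts.attach.map (fun s => applyHom h s.1)).getD i (Term.var i)) (h f)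
decreasing_by
  simp only [Term.app.sizeOf_spec]
  have := List.sizeOf_lt_of_mem s.2
  omega

/-- The image of a rule under a tree homomorphism. -/
def homRule {α : Type u} (h : α → Term α) (ρ : ERule α) : ERule α :=
  ⟨applyHom h ρ.lhs, applyHom h ρ.rhs,
    ρ.conds.map (fun c => (applyHom h c.1, applyHom h c.2))⟩

/-- The image of an eCTRS under a tree homomorphism. -/
def homSys {α : Type u} (h : α → Term α) (R : Set (ERule α)) : Set (ERule α) :=
  homRule h '' R

/-- `h` determines a tree homomorphism from `T(G₁,V)` to `T(G₂,V)` (w.r.t. arity `ar`):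
for `f ∈ G₁` of arity `n`, `h f` is a term over `G₂` with variables among `x₁, …, x_n`. -/
def TreeHom {α : Type u} (ar : α → ℕ) (G₁ G₂ : Set α) (h : α → Term α) : Prop :=
  ∀ f ∈ G₁, (h f).overSig G₂ ∧ ∀ x ∈ (h f).varList, x < ar f

/-- `F`-identical tree homomorphism. -/
def FIdentical {α : Type u} (ar : α → ℕ) (F : Set α) (h : α → Term α) : Prop :=
  ∀ f ∈ F, h f = Term.app f ((List.range (ar f)).map Term.var)

/-- Non-erasing tree homomorphism (on the signature `G`). -/
def HomNonErasing {α : Type u} (ar : α → ℕ) (G : Set α) (h : α → Term α) : Prop :=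
  ∀ f ∈ G, (h f).varFinset = Finset.range (ar f)

/-- The homomorphism is EV-preserving for the eTRS `S`. -/
def EVPreserving {α : Type u} (h : α → Term α) (S : Set (ERule α)) : Prop :=
  ∀ ρ ∈ S, (homRule h ρ).extraVars = ρ.extraVars

/-! ## Unravelings for join and normal CTRSs, and `Norm` -/

/-- Marchiori-style unraveling `U_J` of a join conditional rule. -/
def unravelJ {α : Type u} (uj : ERule α → α) (ρ : ERule α) : List (ERule α) :=
  if ρ.conds.isEmpty then [ρ]
  else
    [ ⟨ρ.lhs,
        Term.app (uj ρ) ((ρ.conds.foldr (fun c acc => c.1 :: c.2 :: acc) []) ++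
          (seqOf ρ.lhs.varFinset).map Term.var), []⟩,
      ⟨Term.app (uj ρ)
          (((List.range ρ.conds.length).foldr
              (fun j acc => Term.var (ρ.freshBase + j) :: Term.var (ρ.freshBase + j) :: acc) []) ++
            (seqOf ρ.lhs.varFinset).map Term.var),
        ρ.rhs, []⟩ ]

def UJSys {α : Type u} (uj : ERule α → α) (R : Set (ERule α)) : Set (ERule α) :=
  { q | ∃ ρ ∈ R, q ∈ unravelJ uj ρ }

/-- Unraveling `U_N` of a normal conditional rule. -/
def unravelN {α : Type u} (un : ERule α → α) (ρ : ERule α) : List (ERule α) :=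
  if ρ.conds.isEmpty then [ρ]
  else
    [ ⟨ρ.lhs,
        Term.app (un ρ) (ρ.conds.map Prod.fst ++ (seqOf ρ.lhs.varFinset).map Term.var), []⟩,
      ⟨Term.app (un ρ) (ρ.conds.map Prod.snd ++ (seqOf ρ.lhs.varFinset).map Term.var),
        ρ.rhs, []⟩ ]

def UNSys {α : Type u} (un : ERule α → α) (R : Set (ERule α)) : Set (ERule α) :=
  { q | ∃ ρ ∈ R, q ∈ unravelN un ρ }

/-- `Norm` on rules: `l → r ⇐ eq(s₁,t₁) ↠ eq(⊤,⊤); …; eq(s_k,t_k) ↠ eq(⊤,⊤)`. -/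
def normRule {α : Type u} (eqS topS : α) (ρ : ERule α) : ERule α :=
  ⟨ρ.lhs, ρ.rhs,
    ρ.conds.map (fun c =>
      (Term.app eqS [c.1, c.2], Term.app eqS [Term.app topS [], Term.app topS []]))⟩

/-- `Norm(R) = {eq(x,x) → eq(⊤,⊤)} ∪ {Norm(ρ) | ρ ∈ R}`. -/
def NormSys {α : Type u} (eqS topS : α) (R : Set (ERule α)) : Set (ERule α) :=
  insert
    ⟨Term.app eqS [Term.var 0, Term.var 0],
      Term.app eqS [Term.app topS [], Term.app topS []], []⟩
    (normRule eqS topS '' R)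

/-- A normal CTRS: a deterministic, non-LV CTRS all of whose condition right-hand
sides are ground normal forms w.r.t. `R_u`. -/
def NormalCTRS {α : Type u} (R : Set (ERule α)) : Prop :=
  ∀ ρ ∈ R, ρ.Det ∧ ρ.nonLV ∧ ∀ c ∈ ρ.conds, c.2.Ground ∧ IsNF (Ru R) c.2

/-!
`U_opt(R)`-reductions are simulated backwards. A term over `F` and the U symbols is read back
into `F` by replacing each `U^ρ_i(…)` with an instance `rσ` of the right-hand side of `ρ` whose
substitution satisfies the conditions after the `i`-th (`BackTrans`). Undoing one
`U_opt(R)`-step preserves this relation to a fixed target: right-linearity of the unraveled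
rules lets a substitution for the pattern `sᵢ` (or `r`) be read off from a back-translation,
determinism and right-linearity keep the variables of `sᵢ` out of `Yᵢ`, so rebinding them
disturbs neither `r` nor the later conditions, and non-erasingness makes the substitution
cover the left-hand side. A term over `F` is related to itself, and a term over `F` related
to `v` rewrites to `v` in `R`.
-/

theorem List.forall₂_map_map_iff {β γ δ : Type*} {r : γ → δ → Prop} {f : β → γ} {g : β → δ}
    {l : List β} : Forall₂ r (l.map f) (l.map g) ↔ ∀ x ∈ l, r (f x) (g x) := by
  rw [forall₂_map_left_iff, forall₂_map_right_iff, forall₂_same]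

theorem List.forall₂_of_getElem {β γ : Type*} {r : β → γ → Prop} {l₁ : List β} {l₂ : List γ}
    (hlen : l₁.length = l₂.length)
    (h : ∀ i (h₁ : i < l₁.length) (h₂ : i < l₂.length), r l₁[i] l₂[i]) : Forall₂ r l₁ l₂ :=
  forall₂_iff_get.2 ⟨hlen, h⟩

theorem List.forall₂_append_cons {β γ : Type*} {r : β → γ → Prop} {pre post : List β} {a b : β}
    {vs : List γ} (hlen : (pre ++ a :: post).length = vs.length)
    (hothers : ∀ i (h₁ : i < (pre ++ a :: post).length) (h₂ : i < vs.length), i ≠ pre.length →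
      r (pre ++ a :: post)[i] vs[i])
    (hmid : ∀ h : pre.length < vs.length, r b vs[pre.length]) :
    Forall₂ r (pre ++ b :: post) vs := by
  refine forall₂_of_getElem (by simpa using hlen) fun i h₁ h₂ => ?_
  rcases eq_or_ne i pre.length with rfl | hi
  · simpa using hmid h₂
  · have heq : (pre ++ b :: post)[i] = (pre ++ a :: post)[i]'(by simpa using h₁) := by
      simp only [getElem_append, getElem_cons]
      grind
    exact heq ▸ hothers i _ h₂ hi

theorem List.mem_foldr_union_map {β γ : Type*} [DecidableEq γ] {g : β → Finset γ} {l : List β}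
    {x : γ} : x ∈ (l.map g).foldr (· ∪ ·) ∅ ↔ ∃ c ∈ l, x ∈ g c := by
  induction l <;> simp_all

namespace Term

variable {α : Type u}

@[elab_as_elim]
theorem ind {P : Term α → Prop} (var : ∀ x, P (.var x))
    (app : ∀ f ts, (∀ t ∈ ts, P t) → P (.app f ts)) : ∀ t, P t
  | .var x => var x
  | .app f ts => app f ts fun t _ => ind var app t
termination_by t => sizeOf t
decreasing_by
  simp only [Term.app.sizeOf_spec]
  have := List.sizeOf_lt_of_mem ‹t ∈ ts›
  omega

@[simp] theorem subst_var (σ : ℕ → Term α) (x : ℕ) : (var x).subst σ = σ x := by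
  rw [subst]

theorem subst_app (σ : ℕ → Term α) (f : α) (ts : List (Term α)) :
    (app f ts).subst σ = app f (ts.map (·.subst σ)) := by
  rw [subst]
  simp

@[simp] theorem varList_var (x : ℕ) : (var x : Term α).varList = [x] := by
  rw [varList]

theorem varList_app (f : α) (ts : List (Term α)) :
    (app f ts).varList = ts.flatMap varList := by
  rw [varList]
  induction ts <;> simp_all

theorem apps_app (f : α) (ts : List (Term α)) :
    (app f ts).apps = (f, ts.length) :: ts.flatMap apps := by
  rw [apps]
  congr 1
  induction ts <;> simp_all

@[simp] theorem mem_varFinset {t : Term α} {x : ℕ} : x ∈ t.varFinset ↔ x ∈ t.varList :=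
  List.mem_toFinset

theorem subst_congr {σ σ' : ℕ → Term α} :
    ∀ t : Term α, (∀ x ∈ t.varList, σ x = σ' x) → t.subst σ = t.subst σ' := by
  intro t
  induction t using Term.ind with
  | var x => simp
  | app f ts ih =>
    intro h
    simp only [subst_app, varList_app, List.mem_flatMap] at h ⊢
    exact congrArg _ (List.map_congr_left fun t ht => ih t ht fun x hx => h x ⟨t, ht, hx⟩)

theorem overSig_app {F : Set α} {f : α} {ts : List (Term α)} :
    (app f ts).overSig F ↔ f ∈ F ∧ ∀ t ∈ ts, t.overSig F := by
  simp only [overSig, apps_app, List.mem_cons, List.mem_flatMap, forall_eq_or_imp]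
  exact and_congr_right fun _ => ⟨fun h t ht p hp => h p ⟨t, ht, hp⟩,
    fun h p ⟨t, ht, hp⟩ => h t ht p hp⟩

theorem Linear.of_mem_app {f : α} {ts : List (Term α)} (h : (app f ts).Linear) {t : Term α}
    (ht : t ∈ ts) : t.Linear := by
  rw [Linear, varList_app, List.nodup_flatMap] at h
  exact h.1 t ht

theorem exists_common_subst {β : Type*}
    {P : Term α → β → (ℕ → Term α) → Prop}
    (hP : ∀ t w θ θ', (∀ x ∈ t.varList, θ x = θ' x) → P t w θ → P t w θ')
    {ts : List (Term α)} {ws : List β} (hts : (ts.flatMap varList).Nodup)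
    (h : List.Forall₂ (fun t w => ∃ θ, P t w θ) ts ws) :
    ∃ θ, List.Forall₂ (fun t w => P t w θ) ts ws := by
  classical
  induction h with
  | nil => exact ⟨Term.var, .nil⟩
  | @cons t w ts ws ht _ ih =>
    rw [List.flatMap_cons, List.nodup_append] at hts
    obtain ⟨θ₁, h₁⟩ := ht
    obtain ⟨θ₂, h₂⟩ := ih hts.2.1
    have hdisj : ∀ t' ∈ ts, ∀ x ∈ t'.varList, x ∉ t.varList := fun t' ht' x hx hxt =>
      hts.2.2 x hxt x (List.mem_flatMap.2 ⟨t', ht', hx⟩) rfl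
    refine ⟨fun x => if x ∈ t.varList then θ₁ x else θ₂ x,
      .cons (hP _ _ _ _ (fun x hx => (if_pos hx).symm) h₁) ?_⟩
    exact ((List.forall₂_and_left _ _).2 ⟨hdisj, h₂⟩).imp fun t' w' ⟨hd, hP'⟩ =>
      hP _ _ _ _ (fun x hx => (if_neg (hd x hx)).symm) hP'

end Term

namespace ERule

variable {α : Type u} {F : Set α} {ρ : ERule α} {i j : ℕ}

def cond (ρ : ERule α) (i : ℕ) : Term α × Term α := ρ.conds.getD i junkPair

theorem cond_mem (hi : i < ρ.conds.length) : ρ.cond i ∈ ρ.conds := by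
  rw [cond, List.getD_eq_getElem _ _ hi]
  exact List.getElem_mem hi

theorem exists_cond_eq_of_mem {c : Term α × Term α} (hc : c ∈ ρ.conds) :
    ∃ i < ρ.conds.length, ρ.cond i = c := by
  obtain ⟨i, hi, rfl⟩ := List.mem_iff_getElem.1 hc
  exact ⟨i, hi, List.getD_eq_getElem _ _ hi⟩

theorem overSig.cond (h : ρ.overSig F) (hi : i < ρ.conds.length) :
    (ρ.cond i).1.overSig F ∧ (ρ.cond i).2.overSig F :=
  h.2.2 _ (cond_mem hi)

theorem mem_Yset_of_mem_rhs {x : ℕ} (hx : x ∈ ρ.rhs.varList) : x ∈ ρ.Yset j := by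
  simp [Yset, hx]

theorem mem_Yset_of_mem_cond_snd {x : ℕ} (hx : x ∈ (ρ.cond j).2.varList) : x ∈ ρ.Yset j := by
  simp only [Yset, Finset.mem_union, Term.mem_varFinset]
  exact Or.inl (Or.inr hx)

theorem mem_Yset_of_lt {x : ℕ} (hji : j < i) (hi : i < ρ.conds.length)
    (hx : x ∈ (ρ.cond i).1.varList ∨ x ∈ (ρ.cond i).2.varList) : x ∈ ρ.Yset j := by
  have hmem : ρ.cond i ∈ ρ.conds.drop (j + 1) := by
    rw [cond, List.getD_eq_getElem _ _ hi, List.mem_iff_getElem]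
    exact ⟨i - (j + 1), by simp; omega, by simp; congr 1; omega⟩
  simp only [Yset, Finset.mem_union, List.mem_foldr_union_map]
  exact Or.inr ⟨_, hmem, by simpa using hx⟩

end ERule

section Reduction

variable {α : Type u} {S : Set (ERule α)} {a b : Term α}

def Ctx.comp : Ctx α → Ctx α → Ctx α
  | .hole, D => D
  | .app f pre C post, D => .app f pre (C.comp D) post

theorem Ctx.plug_comp (C D : Ctx α) (t : Term α) : (C.comp D).plug t = C.plug (D.plug t) := by
  induction C with
  | hole => rfl
  | app f pre C post ih => simp [comp, plug, ih]

theorem RedN.mono {n m : ℕ} (hnm : n ≤ m) (h : RedN S n a b) : RedN S m a b := by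
  induction hnm with
  | refl => exact h
  | step _ ih => exact Or.inl ih

theorem RedN.plug (C : Ctx α) : ∀ {n : ℕ} {a b : Term α}, RedN S n a b →
    RedN S n (C.plug a) (C.plug b)
  | 0, _, _, h => h.elim
  | _ + 1, _, _, .inl h => .inl (h.plug C)
  | _ + 1, _, _, .inr ⟨ρ, hρ, D, σ, ha, hb, hc⟩ =>
    .inr ⟨ρ, hρ, C.comp D, σ, by rw [ha, Ctx.plug_comp], by rw [hb, Ctx.plug_comp], hc⟩

theorem Red.plug (C : Ctx α) (h : Red S a b) : Red S (C.plug a) (C.plug b) :=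
  let ⟨n, h⟩ := h; ⟨n, h.plug C⟩

theorem RedStar.plug (C : Ctx α) (h : RedStar S a b) : RedStar S (C.plug a) (C.plug b) :=
  Relation.ReflTransGen.lift C.plug (fun _ _ => Red.plug C) _ _ h

theorem RedStar.app_congr (f : α) {vs ws : List (Term α)}
    (h : List.Forall₂ (RedStar S) vs ws) : RedStar S (.app f vs) (.app f ws) := by
  suffices ∀ pre, RedStar S (.app f (pre ++ vs)) (.app f (pre ++ ws)) by simpa using this []
  induction h with
  | nil => exact fun _ => .refl
  | @cons v w vs ws hvw _ ih =>
    intro pre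
    have htail := ih (pre ++ [w])
    simp only [List.append_assoc, List.singleton_append] at htail
    exact (hvw.plug (Ctx.app f pre .hole vs)).trans htail

theorem RedStar.eventually_redN (h : RedStar S a b) :
    ∀ᶠ n in Filter.atTop, Relation.ReflTransGen (RedN S n) a b := by
  induction h with
  | refl => exact Filter.Eventually.of_forall fun _ => .refl
  | tail _ hstep ih =>
    obtain ⟨m, hm⟩ := hstep
    filter_upwards [ih, Filter.eventually_ge_atTop m] with n hn hmn
    exact hn.tail (hm.mono hmn)

theorem Red.of_mem {q : ERule α} (hq : q ∈ S) (σ : ℕ → Term α)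
    (h : ∀ c ∈ q.conds, RedStar S (c.1.subst σ) (c.2.subst σ)) :
    Red S (q.lhs.subst σ) (q.rhs.subst σ) := by
  have hev : ∀ᶠ n in Filter.atTop, ∀ c ∈ q.conds,
      Relation.ReflTransGen (RedN S n) (c.1.subst σ) (c.2.subst σ) :=
    (Filter.eventually_all_finite q.conds.finite_toSet).2 fun c hc => (h c hc).eventually_redN
  obtain ⟨n, hn⟩ := hev.exists
  exact ⟨n + 1, .inr ⟨q, hq, .hole, σ, rfl, rfl, hn⟩⟩

theorem Red.exists_plug (h : Red S a b) : ∃ q ∈ S, ∃ (C : Ctx α) (σ : ℕ → Term α),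
    a = C.plug (q.lhs.subst σ) ∧ b = C.plug (q.rhs.subst σ) := by
  obtain ⟨n, h⟩ := h
  induction n with
  | zero => exact h.elim
  | succ n ih => exact h.elim ih fun ⟨q, hq, C, σ, ha, hb, _⟩ => ⟨q, hq, C, σ, ha, hb⟩

end Reduction

section Unraveling

variable {α : Type u}

theorem varList_mkU (f : α) (t : Term α) (xs : List ℕ) :
    (mkU f t xs).varList = t.varList ++ xs := by
  simp [mkU, Term.varList_app, List.flatMap_map]

theorem subst_mkU (σ : ℕ → Term α) (f : α) (t : Term α) (xs : List ℕ) :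
    (mkU f t xs).subst σ = .app f (t.subst σ :: xs.map σ) := by
  simp [mkU, Term.subst_app, Function.comp_def]

@[simp] theorem mem_seqOf {s : Finset ℕ} {x : ℕ} : x ∈ seqOf s ↔ x ∈ s := Finset.mem_sort _

def unravelOptRule (u : ℕ → α) (ρ : ERule α) (j : ℕ) : ERule α :=
  ⟨if j = 0 then ρ.lhs else mkU (u (j - 1)) (ρ.cond (j - 1)).2 (seqOf (ρ.Zset (j - 1))),
    if j < ρ.conds.length then mkU (u j) (ρ.cond j).1 (seqOf (ρ.Zset j)) else ρ.rhs, []⟩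

theorem mem_unravelOpt {u : ℕ → α} {ρ q : ERule α} :
    q ∈ unravelOpt u ρ ↔ ∃ j ≤ ρ.conds.length, unravelOptRule u ρ j = q := by
  simp only [unravelOpt, unravelWith, List.mem_map, List.mem_range, Nat.lt_succ_iff]
  rfl

def ERule.CondsHoldFrom (R : Set (ERule α)) (ρ : ERule α) (j : ℕ)
    (σ : ℕ → Term α) : Prop :=
  ∀ i, j ≤ i → i < ρ.conds.length → RedStar R ((ρ.cond i).1.subst σ) ((ρ.cond i).2.subst σ)

def ERule.uArgs (ρ : ERule α) (i : ℕ) (σ : ℕ → Term α) : List (Term α) :=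
  (ρ.cond i).2.subst σ :: (seqOf (ρ.Zset i)).map σ

theorem subst_mkU_cond (σ : ℕ → Term α) (f : α) (ρ : ERule α) (i : ℕ) :
    (mkU f (ρ.cond i).2 (seqOf (ρ.Zset i))).subst σ = .app f (ρ.uArgs i σ) :=
  subst_mkU σ f _ _

end Unraveling

/-- `BackTrans F R u M v`: some back-translation of `M` to a term over `F` rewrites to `v`
in `R`. A subterm `U^ρ_i(M₀, M⃗)` is read back as an instance `rσ` of the right-hand side of
`ρ`, where `σ` satisfies the conditions after the `i`-th, and `M₀, M⃗` are read back into
the arguments `tᵢσ, Z⃗ᵢσ` of `U^ρ_i(tᵢ, Z⃗ᵢ)σ`. -/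
inductive BackTrans {α : Type u} (F : Set α) (R : Set (ERule α)) (u : ERule α → ℕ → α) :
    Term α → Term α → Prop
  | var (x : ℕ) : BackTrans F R u (.var x) (.var x)
  | app (f : α) (Ms vs : List (Term α)) : f ∈ F → Ms.length = vs.length →
      (∀ i (h₁ : i < Ms.length) (h₂ : i < vs.length), BackTrans F R u Ms[i] vs[i]) →
      BackTrans F R u (.app f Ms) (.app f vs)
  | uSym (ρ : ERule α) (σ : ℕ → Term α) (i : ℕ) (Ms : List (Term α)) :
      ρ ∈ R → i < ρ.conds.length →
      ρ.CondsHoldFrom R (i + 1) σ → Ms.length = (ρ.uArgs i σ).length →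
      (∀ m (h₁ : m < Ms.length) (h₂ : m < (ρ.uArgs i σ).length),
        BackTrans F R u Ms[m] (ρ.uArgs i σ)[m]) →
      BackTrans F R u (.app (u ρ i) Ms) (ρ.rhs.subst σ)
  | tail {M v w : Term α} : BackTrans F R u M v → Red R v w → BackTrans F R u M w

namespace BackTrans

variable {α : Type u} {F : Set α} {R : Set (ERule α)} {u : ERule α → ℕ → α}
  {M v w : Term α} {ρ : ERule α} {j : ℕ}

theorem app_of_forall₂ {f : α} {Ms vs : List (Term α)} (hf : f ∈ F)
    (h : List.Forall₂ (BackTrans F R u) Ms vs) : BackTrans F R u (.app f Ms) (.app f vs) :=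
  .app f Ms vs hf h.length_eq fun _ h₁ h₂ => h.get h₁ h₂

theorem uSym_of_forall₂ {σ : ℕ → Term α} {i : ℕ} {Ms : List (Term α)}
    (hρ : ρ ∈ R) (hi : i < ρ.conds.length)
    (hconds : ρ.CondsHoldFrom R (i + 1) σ) (h : List.Forall₂ (BackTrans F R u) Ms (ρ.uArgs i σ)) :
    BackTrans F R u (.app (u ρ i) Ms) (ρ.rhs.subst σ) :=
  .uSym ρ σ i Ms hρ hi hconds h.length_eq fun _ h₁ h₂ => h.get h₁ h₂

theorem trans_redStar (h : BackTrans F R u M v) (hvw : RedStar R v w) : BackTrans F R u M w := by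
  induction hvw with
  | refl => exact h
  | tail _ hstep ih => exact ih.tail hstep

theorem refl {t : Term α} (ht : t.overSig F) : BackTrans F R u t t := by
  induction t using Term.ind with
  | var x => exact .var x
  | app f ts ih =>
    rw [Term.overSig_app] at ht
    exact app_of_forall₂ ht.1 (List.forall₂_same.2 fun t h => ih t h (ht.2 t h))

theorem subst {p : Term α} (hp : p.overSig F) {θ σ : ℕ → Term α}
    (h : ∀ x ∈ p.varList, BackTrans F R u (θ x) (σ x)) :
    BackTrans F R u (p.subst θ) (p.subst σ) := by
  induction p using Term.ind with
  | var x => simpa using h x (by simp)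
  | app f ts ih =>
    rw [Term.overSig_app] at hp
    simp only [Term.subst_app, Term.varList_app, List.mem_flatMap] at h ⊢
    exact app_of_forall₂ hp.1 (List.forall₂_map_map_iff.2 fun t ht =>
      ih t ht (hp.2 t ht) fun x hx => h x ⟨t, ht, hx⟩)

theorem redStar (hfresh : UFresh F u R) (h : BackTrans F R u M v) (hM : M.overSig F) :
    RedStar R M v := by
  induction h with
  | var x => exact .refl
  | app f Ms vs _ hlen _ ih =>
    rw [Term.overSig_app] at hM
    exact RedStar.app_congr f (List.forall₂_of_getElem hlen fun i h₁ h₂ =>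
      ih i h₁ h₂ (hM.2 _ (List.getElem_mem h₁)))
  | uSym ρ σ i Ms hρ hi =>
    exact absurd (Term.overSig_app.1 hM).1 (hfresh.1 ρ hρ i hi)
  | tail _ hstep ih => exact (ih hM).tail hstep

theorem exists_of_app (hfresh : UFresh F u R) {f : α} (hf : f ∈ F) {Ms : List (Term α)}
    (h : BackTrans F R u (.app f Ms) v) :
    ∃ vs, RedStar R (.app f vs) v ∧ List.Forall₂ (BackTrans F R u) Ms vs := by
  generalize hM : Term.app f Ms = M at h
  induction h with
  | var => cases hM
  | app g Ms' vs _ hlen hargs =>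
    obtain ⟨rfl, rfl⟩ := Term.app.inj hM
    exact ⟨vs, .refl, List.forall₂_of_getElem hlen hargs⟩
  | uSym ρ σ i Ms' hρ hi =>
    obtain ⟨rfl, -⟩ := Term.app.inj hM
    exact absurd hf (hfresh.1 ρ hρ i hi)
  | tail _ hstep ih =>
    obtain ⟨vs, hvs, hargs⟩ := ih hM
    exact ⟨vs, hvs.tail hstep, hargs⟩

theorem exists_of_uSym (hfresh : UFresh F u R) (hρ : ρ ∈ R) {i : ℕ}
    (hi : i < ρ.conds.length) {Ms : List (Term α)} (h : BackTrans F R u (.app (u ρ i) Ms) v) :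
    ∃ σ : ℕ → Term α, RedStar R (ρ.rhs.subst σ) v ∧
      ρ.CondsHoldFrom R (i + 1) σ ∧ List.Forall₂ (BackTrans F R u) Ms (ρ.uArgs i σ) := by
  generalize hM : Term.app (u ρ i) Ms = M at h
  induction h with
  | var => cases hM
  | app g Ms' vs hg =>
    obtain ⟨rfl, -⟩ := Term.app.inj hM
    exact absurd hg (hfresh.1 ρ hρ i hi)
  | uSym ρ' σ i' Ms' hρ' hi' hconds hlen hargs =>
    obtain ⟨hu, rfl⟩ := Term.app.inj hM
    obtain ⟨rfl, rfl⟩ := hfresh.2 ρ hρ ρ' hρ' i hi i' hi' hu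
    exact ⟨σ, .refl, hconds, List.forall₂_of_getElem hlen hargs⟩
  | tail _ hstep ih =>
    obtain ⟨σ, hσ, hconds, hargs⟩ := ih hM
    exact ⟨σ, hσ.tail hstep, hconds, hargs⟩

theorem plug {A B : Term α} (hAB : ∀ v, BackTrans F R u A v → BackTrans F R u B v) (C : Ctx α)
    (h : BackTrans F R u (C.plug A) v) : BackTrans F R u (C.plug B) v := by
  generalize hM : C.plug A = M at h
  induction h generalizing C with
  | var x =>
    cases C with
    | hole =>
      obtain rfl : A = _ := hM
      exact hAB _ (.var x)
    | app => cases hM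
  | app f Ms vs hf hlen hargs ih =>
    cases C with
    | hole =>
      obtain rfl : A = _ := hM
      exact hAB _ (.app f Ms vs hf hlen hargs)
    | app g pre c post =>
      obtain ⟨rfl, rfl⟩ := Term.app.inj hM
      exact app_of_forall₂ hf (List.forall₂_append_cons hlen (fun i h₁ h₂ _ => hargs i h₁ h₂)
        fun h₂ => ih _ (by simp) h₂ c (by simp))
  | uSym ρ σ i Ms hρ hi hconds hlen hargs ih =>
    cases C with
    | hole =>
      obtain rfl : A = _ := hM
      exact hAB _ (.uSym ρ σ i Ms hρ hi hconds hlen hargs)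
    | app g pre c post =>
      obtain ⟨rfl, rfl⟩ := Term.app.inj hM
      exact uSym_of_forall₂ hρ hi hconds (List.forall₂_append_cons hlen
        (fun i h₁ h₂ _ => hargs i h₁ h₂) fun h₂ => ih _ (by simp) h₂ c (by simp))
  | tail _ hstep ih => exact (ih C hM).tail hstep

theorem exists_subst_of_linear (hfresh : UFresh F u R) {p : Term α} (hp : p.overSig F)
    (hlin : p.Linear) {θ : ℕ → Term α} (h : BackTrans F R u (p.subst θ) v) :
    ∃ θ' : ℕ → Term α, RedStar R (p.subst θ') v ∧
      ∀ x ∈ p.varList, BackTrans F R u (θ x) (θ' x) := by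
  induction p using Term.ind generalizing v with
  | var x =>
    refine ⟨fun _ => v, by simpa using .refl, ?_⟩
    simpa using h
  | app f ts ih =>
    rw [Term.overSig_app] at hp
    rw [Term.subst_app] at h
    obtain ⟨vs, hvs, hargs⟩ := exists_of_app hfresh hp.1 h
    rw [List.forall₂_map_left_iff] at hargs
    have hsub : ∀ t ∈ ts, ∀ w, BackTrans F R u (t.subst θ) w →
        ∃ θ', (∀ x ∈ t.varList, BackTrans F R u (θ x) (θ' x)) ∧ RedStar R (t.subst θ') w :=
      fun t ht w hw => (ih t ht (hp.2 t ht) (hlin.of_mem_app ht) hw).imp fun _ h => ⟨h.2, h.1⟩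
    obtain ⟨θ', hθ'⟩ := Term.exists_common_subst
      (fun t w θ₁ θ₂ heq ⟨hrel, hred⟩ =>
        ⟨fun x hx => heq x hx ▸ hrel x hx, Term.subst_congr t heq ▸ hred⟩)
      (by rwa [Term.Linear, Term.varList_app] at hlin)
      (((List.forall₂_and_left _ _).2 ⟨hsub, hargs⟩).imp fun t w h => h.1 w h.2)
    obtain ⟨hrel, hred⟩ := (List.forall₂_and_left _ _).1 hθ'
    refine ⟨θ', ?_, ?_⟩
    · rw [Term.subst_app]
      exact (RedStar.app_congr f (List.forall₂_map_left_iff.2 hred)).trans hvs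
    · simp only [Term.varList_app, List.mem_flatMap]
      rintro x ⟨t, ht, hx⟩
      exact hrel t ht x hx

theorem exists_of_uSym_cond_fst (hfresh : UFresh F u R) (hρ : ρ ∈ R) (hsig : ρ.overSig F)
    (hdet : ρ.Det) (hj : j < ρ.conds.length) (hlin : (ρ.cond j).1.Linear)
    (hdisj : ∀ x ∈ (ρ.cond j).1.varList, x ∉ ρ.Zset j) {θ : ℕ → Term α}
    (h : BackTrans F R u ((mkU (u ρ j) (ρ.cond j).1 (seqOf (ρ.Zset j))).subst θ) v) :
    ∃ σ : ℕ → Term α, RedStar R (ρ.rhs.subst σ) v ∧ ρ.CondsHoldFrom R j σ ∧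
      ∀ x ∈ (mkU (u ρ j) (ρ.cond j).1 (seqOf (ρ.Zset j))).varList,
        BackTrans F R u (θ x) (σ x) := by
  classical
  rw [subst_mkU] at h
  obtain ⟨σ, hrσ, hconds, hargs⟩ := exists_of_uSym hfresh hρ hj h
  obtain ⟨hs, hZ⟩ := List.forall₂_cons.1 hargs
  rw [List.forall₂_map_map_iff] at hZ
  obtain ⟨θ', hsθ', hθθ'⟩ := exists_subst_of_linear hfresh (hsig.cond hj).1 hlin hs
  -- determinism puts the variables of `sⱼ` in `Xⱼ`, right-linearity keeps them out of `Zⱼ`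
  have hY : ∀ x ∈ (ρ.cond j).1.varList, x ∉ ρ.Yset j := fun x hx hy =>
    hdisj x hx (Finset.mem_inter.2 ⟨hdet j hj (Term.mem_varFinset.2 hx), hy⟩)
  set σ' : ℕ → Term α := fun x => if x ∈ (ρ.cond j).1.varList then θ' x else σ x
  have hσ'Y : ∀ t : Term α, (∀ x ∈ t.varList, x ∈ ρ.Yset j) → t.subst σ' = t.subst σ :=
    fun t ht => Term.subst_congr t fun x hx => if_neg fun hs => hY x hs (ht x hx)
  refine ⟨σ', ?_, ?_, ?_⟩
  · rwa [hσ'Y _ fun x => ρ.mem_Yset_of_mem_rhs]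
  · intro i hji hi
    rcases hji.eq_or_lt with rfl | hji
    · rw [hσ'Y _ fun x => ρ.mem_Yset_of_mem_cond_snd,
        Term.subst_congr (σ' := θ') _ fun x hx => if_pos hx]
      exact hsθ'
    · rw [hσ'Y _ fun x hx => ρ.mem_Yset_of_lt hji hi (.inl hx),
        hσ'Y _ fun x hx => ρ.mem_Yset_of_lt hji hi (.inr hx)]
      exact hconds i hji hi
  · intro x hx
    rcases List.mem_append.1 ((varList_mkU _ _ _) ▸ hx) with hx | hx
    · simpa [σ', hx] using hθθ' x hx
    · have hxs : x ∉ (ρ.cond j).1.varList := fun hs => hdisj x hs (mem_seqOf.1 hx)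
      simpa [σ', hxs] using hZ x hx

theorem exists_of_unravelOptRule_rhs (hfresh : UFresh F u R) (hρ : ρ ∈ R)
    (hsig : ρ.overSig F) (hdet : ρ.Det) (hj : j ≤ ρ.conds.length)
    (hRL : (unravelOptRule (u ρ) ρ j).RL) {θ : ℕ → Term α}
    (h : BackTrans F R u ((unravelOptRule (u ρ) ρ j).rhs.subst θ) v) :
    ∃ σ : ℕ → Term α, RedStar R (ρ.rhs.subst σ) v ∧ ρ.CondsHoldFrom R j σ ∧
      ∀ x ∈ (unravelOptRule (u ρ) ρ j).rhs.varList, BackTrans F R u (θ x) (σ x) := by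
  simp only [ERule.RL, unravelOptRule] at hRL h ⊢
  rcases hj.lt_or_eq with hj | rfl
  · rw [if_pos hj] at hRL h ⊢
    rw [Term.Linear, varList_mkU, List.nodup_append] at hRL
    exact exists_of_uSym_cond_fst hfresh hρ hsig hdet hj hRL.1
      (fun x hx hZ => hRL.2.2 x hx x (mem_seqOf.2 hZ) rfl) h
  · rw [if_neg (lt_irrefl _)] at hRL h ⊢
    obtain ⟨σ, hrσ, hvars⟩ := exists_subst_of_linear hfresh hsig.2.1 hRL h
    exact ⟨σ, hrσ, fun i hi hi' => absurd hi' (not_lt.2 hi), hvars⟩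

theorem of_unravelOptRule_lhs (hρ : ρ ∈ R) (hsig : ρ.overSig F) (hj : j ≤ ρ.conds.length)
    {θ σ : ℕ → Term α} (hrσ : RedStar R (ρ.rhs.subst σ) v) (hconds : ρ.CondsHoldFrom R j σ)
    (hvars : ∀ x ∈ (unravelOptRule (u ρ) ρ j).lhs.varList, BackTrans F R u (θ x) (σ x)) :
    BackTrans F R u ((unravelOptRule (u ρ) ρ j).lhs.subst θ) v := by
  simp only [unravelOptRule] at hvars ⊢
  rcases Nat.eq_zero_or_pos j with rfl | hj0
  · rw [if_pos rfl] at hvars ⊢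
    have hstep : Red R (ρ.lhs.subst σ) (ρ.rhs.subst σ) := Red.of_mem hρ σ fun c hc => by
      obtain ⟨i, hi, rfl⟩ := ρ.exists_cond_eq_of_mem hc
      exact hconds i (Nat.zero_le i) hi
    exact ((subst hsig.1 hvars).tail hstep).trans_redStar hrσ
  · rw [if_neg hj0.ne'] at hvars ⊢
    rw [varList_mkU] at hvars
    rw [subst_mkU_cond]
    refine (uSym_of_forall₂ hρ (by omega) (Nat.sub_add_cancel hj0 ▸ hconds) ?_).trans_redStar hrσ
    refine .cons (subst (hsig.cond (by omega)).2 fun x hx => hvars x (List.mem_append_left _ hx)) ?_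
    exact List.forall₂_map_map_iff.2 fun x hx => hvars x (List.mem_append_right _ hx)

theorem of_rhs_of_mem_UoptSys (hsig : ∀ ρ ∈ R, ρ.overSig F) (hdet : ∀ ρ ∈ R, ρ.Det)
    (hRL : ∀ ρ ∈ R, ∀ q ∈ unravelOpt (u ρ) ρ, q.RL)
    (hNE : ∀ ρ ∈ R, ∀ q ∈ unravelOpt (u ρ) ρ, q.NE) (hfresh : UFresh F u R)
    {q : ERule α} (hq : q ∈ UoptSys u R) {θ : ℕ → Term α}
    (h : BackTrans F R u (q.rhs.subst θ) v) : BackTrans F R u (q.lhs.subst θ) v := by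
  obtain ⟨ρ, hρ, hqρ⟩ := hq
  obtain ⟨j, hj, rfl⟩ := mem_unravelOpt.1 hqρ
  obtain ⟨σ, hrσ, hconds, hvars⟩ :=
    exists_of_unravelOptRule_rhs hfresh hρ (hsig ρ hρ) (hdet ρ hρ) hj (hRL ρ hρ _ hqρ) h
  refine of_unravelOptRule_lhs hρ (hsig ρ hρ) hj hrσ hconds fun x hx => hvars x ?_
  simpa using hNE ρ hρ _ hqρ (Term.mem_varFinset.2 hx)

theorem of_red_UoptSys (hsig : ∀ ρ ∈ R, ρ.overSig F) (hdet : ∀ ρ ∈ R, ρ.Det)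
    (hRL : ∀ ρ ∈ R, ∀ q ∈ unravelOpt (u ρ) ρ, q.RL)
    (hNE : ∀ ρ ∈ R, ∀ q ∈ unravelOpt (u ρ) ρ, q.NE) (hfresh : UFresh F u R)
    {a b : Term α} (hab : Red (UoptSys u R) a b)
    (h : BackTrans F R u b v) : BackTrans F R u a v := by
  obtain ⟨q, hq, C, σ, rfl, rfl⟩ := hab.exists_plug
  exact plug (fun _ => of_rhs_of_mem_UoptSys hsig hdet hRL hNE hfresh hq) C h

end BackTrans

theorem uopt_sound_of_ultraRLNE_general {α : Type u} (F : Set α) (R : Set (ERule α))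
    (u : ERule α → ℕ → α)
    (hsig : ∀ ρ ∈ R, ρ.overSig F)
    (hdet : ∀ ρ ∈ R, ρ.Det)
    (hRL : ∀ ρ ∈ R, ∀ q ∈ unravelOpt (u ρ) ρ, q.RL)
    (hNE : ∀ ρ ∈ R, ∀ q ∈ unravelOpt (u ρ) ρ, q.NE)
    (hfresh : UFresh F u R) :
    ∀ s t : Term α, s.overSig F → t.overSig F →
      RedStar (UoptSys u R) s t → RedStar R s t := by
  intro s t hs ht hst
  have hback : BackTrans F R u s t := by
    clear hs
    induction hst using Relation.ReflTransGen.head_induction_on with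
    | refl => exact .refl ht
    | head hstep _ ih => exact .of_red_UoptSys hsig hdet hRL hNE hfresh hstep ih
  exact hback.redStar hfresh hs

/-- The optimized unraveling `U_opt` is sound for every `U_opt`-RLNE
eDCTRS `R` over a signature `F` that is non-LV or non-RV: for all terms
`s, t ∈ T(F,V)`, `s →*_{U_opt(R)} t` implies `s →*_R t`. -/
theorem uopt_sound_of_ultraRLNE {α : Type u} (F : Set α) (R : Set (ERule α))
    (u : ERule α → ℕ → α)
    (hsig : ∀ ρ ∈ R, ρ.overSig F)
    (hdet : ∀ ρ ∈ R, ρ.Det)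
    (hRL : ∀ ρ ∈ R, ∀ q ∈ unravelOpt (u ρ) ρ, q.RL)
    (hNE : ∀ ρ ∈ R, ∀ q ∈ unravelOpt (u ρ) ρ, q.NE)
    (hfresh : UFresh F u R)
    (hnv : (∀ ρ ∈ R, ρ.nonLV) ∨ (∀ ρ ∈ R, ρ.nonRV)) :
    ∀ s t : Term α, s.overSig F → t.overSig F →
      RedStar (UoptSys u R) s t → RedStar R s t :=
  uopt_sound_of_ultraRLNE_general F R u hsig hdet hRL hNE hfresh
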